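/- Boundedness and sign of the fractional Laplacian of the bump function (Lemma 6): Let α ∈ (0,2) and let ψ(x) = (1 − ‖x‖²)₊² on ℝ². For each x ∈ ℝ², the integral L_α ψ(x) = ∫_{ℝ²} (2ψ(x) − ψ(x+y) − ψ(x−y)) / (2‖y‖^{2+α}) dy converges absolutely, and there exists a constant k_α > 0 such that |L_α ψ(x)| ≤ k_α for all x ∈ ℝ². Moreover L_α ψ(x) ≤ 0 for all x with ‖x‖ ≥ 1. -/

import Mathlib

/-!
Write `Δ_y ψ(x) = 2ψ(x) − ψ(x+y) − ψ(x−y)`. Since `ψ = φ ∘ q` with `φ(u) = u₊²` (whose derivative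
`2u₊` is `2`-Lipschitz) and `q(x) = 1 − ‖x‖²` a quadratic, a second-order Taylor bound gives
`|Δ_y ψ(x)| ≤ 38 ‖y‖²` for `‖y‖ ≤ 1`, while `0 ≤ ψ ≤ 1` gives `|Δ_y ψ(x)| ≤ 2`. Hence the integrand is
dominated, uniformly in `x`, by a multiple of `min(‖y‖², 1) ‖y‖^{-(2+α)}`, which in polar coordinates
is `r^{1-α}` near `0` and `r^{-1-α}` near `∞`, integrable exactly for `0 < α < 2`. For `‖x‖ ≥ 1`,
`ψ(x) = 0` is the minimum of `ψ`, so the integrand is pointwise nonpositive.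
-/

open MeasureTheory Real Set
open scoped ENNReal InnerProductSpace

noncomputable section

/-- The Euclidean plane `ℝ²`. -/
abbrev Plane : Type := EuclideanSpace ℝ (Fin 2)

/-- The standard bump function `ψ(x) = (1 − ‖x‖²)₊²` on `ℝ²`. -/
def bump (x : Plane) : ℝ := (max (1 - ‖x‖ ^ 2) 0) ^ 2

/-- The (unnormalized) fractional Laplacian of a function on the plane, via the
symmetrized integral representation. -/
def fracLapKernel (α : ℝ) (w : Plane → ℝ) (x : Plane) : ℝ :=
  ∫ y : Plane, (2 * w x - w (x + y) - w (x - y)) / (2 * ‖y‖ ^ (2 + α))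

section SecondDifference

variable {E : Type*}

def secondDiff [AddGroup E] (f : E → ℝ) (x y : E) : ℝ :=
  2 * f x - f (x + y) - f (x - y)

theorem secondDiff_nonpos_of_forall_le [AddGroup E] {f : E → ℝ} {x : E}
    (hx : ∀ z, f x ≤ f z) (y : E) : secondDiff f x y ≤ 0 := by
  unfold secondDiff
  linarith [hx (x + y), hx (x - y)]

variable [NormedAddCommGroup E]

theorem abs_secondDiff_div_rpow_le {f : E → ℝ} {C : ℝ}
    (hf : ∀ x y, |secondDiff f x y| ≤ C * min (‖y‖ ^ 2) 1) (p : ℝ) (x y : E) :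
    |secondDiff f x y / (2 * ‖y‖ ^ p)| ≤ C / 2 * (min (‖y‖ ^ 2) 1 * ‖y‖ ^ (-p)) := by
  rcases eq_or_ne y 0 with rfl | hy
  · simp [secondDiff, two_mul]
  have hden : 0 < 2 * ‖y‖ ^ p := by positivity
  rw [abs_div, abs_of_pos hden, div_le_iff₀ hden, rpow_neg (norm_nonneg y)]
  calc |secondDiff f x y| ≤ C * min (‖y‖ ^ 2) 1 := hf x y
    _ = C / 2 * (min (‖y‖ ^ 2) 1 * (‖y‖ ^ p)⁻¹) * (2 * ‖y‖ ^ p) := by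
      field_simp

theorem integral_secondDiff_div_rpow_nonpos [MeasurableSpace E] (μ : Measure E) {f : E → ℝ}
    {x : E} (hx : ∀ z, f x ≤ f z) (p : ℝ) :
    ∫ y, secondDiff f x y / (2 * ‖y‖ ^ p) ∂μ ≤ 0 :=
  integral_nonpos fun y => div_nonpos_of_nonpos_of_nonneg
    (secondDiff_nonpos_of_forall_le hx y) (by positivity)

variable [NormedSpace ℝ E] [FiniteDimensional ℝ E] [MeasurableSpace E] [BorelSpace E]
  [Nontrivial E] (μ : Measure E) [μ.IsAddHaarMeasure] {α : ℝ}

theorem integrable_min_sq_one_mul_rpow_neg (hα0 : 0 < α) (hα2 : α < 2) :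
    Integrable (fun y : E => min (‖y‖ ^ 2) 1 * ‖y‖ ^ (-(Module.finrank ℝ E + α))) μ := by
  have hd : 0 < Module.finrank ℝ E := Module.finrank_pos
  rw [integrable_fun_norm_addHaar μ (f := fun r => min (r ^ 2) 1 * r ^ (-(_ + α))),
    ← Ioc_union_Ioi_eq_Ioi zero_le_one]
  refine IntegrableOn.union ?_ ?_
  · have h : IntegrableOn (fun r : ℝ => r ^ (1 - α)) (Ioc 0 1) :=
      (intervalIntegral.intervalIntegrable_rpow' (by linarith)).1
    refine h.congr_fun (fun r ⟨hr0, hr1⟩ => ?_) measurableSet_Ioc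
    rw [smul_eq_mul, min_eq_left (pow_le_one₀ hr0.le hr1), ← rpow_natCast, ← rpow_two,
      ← rpow_add hr0, ← rpow_add hr0, Nat.cast_pred hd]
    ring_nf
  · have h : IntegrableOn (fun r : ℝ => r ^ (-1 - α)) (Ioi 1) :=
      integrableOn_Ioi_rpow_of_lt (by linarith) one_pos
    refine h.congr_fun (fun r (hr : 1 < r) => ?_) measurableSet_Ioi
    rw [smul_eq_mul, min_eq_right (one_le_pow₀ hr.le), one_mul, ← rpow_natCast,
      ← rpow_add (one_pos.trans hr), Nat.cast_pred hd]
    ring_nf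

variable {f : E → ℝ} {C : ℝ}

theorem integrable_secondDiff_div_rpow (hα0 : 0 < α) (hα2 : α < 2) (hf_meas : Measurable f)
    (hf : ∀ x y, |secondDiff f x y| ≤ C * min (‖y‖ ^ 2) 1) (x : E) :
    Integrable (fun y => secondDiff f x y / (2 * ‖y‖ ^ (Module.finrank ℝ E + α))) μ := by
  refine ((integrable_min_sq_one_mul_rpow_neg μ hα0 hα2).const_mul (C / 2)).mono' ?_
    (ae_of_all _ fun y => (norm_eq_abs _).trans_le (abs_secondDiff_div_rpow_le hf _ x y))
  have : Measurable (secondDiff f x) := by unfold secondDiff; fun_prop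
  exact (this.div (by fun_prop)).aestronglyMeasurable

theorem abs_integral_secondDiff_div_rpow_le (hα0 : 0 < α) (hα2 : α < 2)
    (hf : ∀ x y, |secondDiff f x y| ≤ C * min (‖y‖ ^ 2) 1) (x : E) :
    |∫ y, secondDiff f x y / (2 * ‖y‖ ^ (Module.finrank ℝ E + α)) ∂μ| ≤
      C / 2 * ∫ y, min (‖y‖ ^ 2) 1 * ‖y‖ ^ (-(Module.finrank ℝ E + α)) ∂μ := by
  rw [← integral_const_mul]
  exact norm_integral_le_of_norm_le
    ((integrable_min_sq_one_mul_rpow_neg μ hα0 hα2).const_mul (C / 2))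
    (ae_of_all _ fun y => (norm_eq_abs _).trans_le (abs_secondDiff_div_rpow_le hf _ x y))

end SecondDifference

theorem abs_sq_max_zero_sub_sub_le (u v : ℝ) :
    |max u 0 ^ 2 - max v 0 ^ 2 - 2 * max v 0 * (u - v)| ≤ (u - v) ^ 2 := by
  rcases le_total u 0 with hu | hu <;> rcases le_total v 0 with hv | hv <;>
    simp only [max_eq_right, max_eq_left, hu, hv] <;> rw [abs_le] <;> constructor <;>
    nlinarith

theorem abs_secondDiff_sq_max_zero_le {c s b : ℝ} (hc : c ≤ 1) (hb : 0 ≤ b) :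
    |2 * max c 0 ^ 2 - max (c - s - b) 0 ^ 2 - max (c + s - b) 0 ^ 2| ≤
      2 * s ^ 2 + 2 * b ^ 2 + 4 * b := by
  have hminus := abs_sq_max_zero_sub_sub_le (c - s - b) c
  have hplus := abs_sq_max_zero_sub_sub_le (c + s - b) c
  have hc₀ : 0 ≤ max c 0 := le_max_right c 0
  have hc₁ : max c 0 ≤ 1 := max_le hc zero_le_one
  rw [abs_le] at hminus hplus ⊢
  constructor <;> nlinarith [mul_nonneg hc₀ hb, mul_nonneg (sub_nonneg.2 hc₁) hb]

theorem bump_nonneg (x : Plane) : 0 ≤ bump x := sq_nonneg _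

theorem bump_le_one (x : Plane) : bump x ≤ 1 :=
  pow_le_one₀ (le_max_right _ _) (max_le (by nlinarith [sq_nonneg ‖x‖]) zero_le_one)

theorem bump_eq_zero_of_one_le_norm {x : Plane} (hx : 1 ≤ ‖x‖) : bump x = 0 := by
  have : 1 - ‖x‖ ^ 2 ≤ 0 := by nlinarith
  simp [bump, max_eq_right this]

theorem measurable_bump : Measurable bump := by
  unfold bump; fun_prop

theorem abs_secondDiff_bump_le_of_norm_le {x y : Plane} (hx : ‖x‖ ≤ 2) (hy : ‖y‖ ≤ 1) :
    |secondDiff bump x y| ≤ 38 * ‖y‖ ^ 2 := by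
  have hinner : ⟪x, y⟫_ℝ ^ 2 ≤ 4 * ‖y‖ ^ 2 := by
    have h : |⟪x, y⟫_ℝ| ≤ 2 * ‖y‖ :=
      (abs_real_inner_le_norm x y).trans (mul_le_mul_of_nonneg_right hx (norm_nonneg y))
    nlinarith [sq_le_sq' (neg_le_of_abs_le h) (le_of_abs_le h)]
  have hsecond := abs_secondDiff_sq_max_zero_le (c := 1 - ‖x‖ ^ 2) (s := 2 * ⟪x, y⟫_ℝ)
    (b := ‖y‖ ^ 2) (by nlinarith) (sq_nonneg _)
  have hadd : 1 - ‖x‖ ^ 2 - 2 * ⟪x, y⟫_ℝ - ‖y‖ ^ 2 = 1 - ‖x + y‖ ^ 2 := by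
    rw [norm_add_sq_real]; ring
  have hsub : 1 - ‖x‖ ^ 2 + 2 * ⟪x, y⟫_ℝ - ‖y‖ ^ 2 = 1 - ‖x - y‖ ^ 2 := by
    rw [norm_sub_sq_real]; ring
  rw [hadd, hsub] at hsecond
  have hy2 : ‖y‖ ^ 2 ≤ 1 := pow_le_one₀ (norm_nonneg y) hy
  refine hsecond.trans ?_
  nlinarith [sq_nonneg ‖y‖]

theorem abs_secondDiff_bump_le (x y : Plane) :
    |secondDiff bump x y| ≤ 38 * min (‖y‖ ^ 2) 1 := by
  rcases le_or_gt ‖y‖ 1 with hy | hy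
  · rw [min_eq_left (pow_le_one₀ (norm_nonneg y) hy)]
    rcases le_or_gt ‖x‖ 2 with hx | hx
    · exact abs_secondDiff_bump_le_of_norm_le hx hy
    · have hx₀ : 1 ≤ ‖x‖ := by linarith
      have hplus : 1 ≤ ‖x + y‖ := by linarith [norm_le_add_norm_add x y]
      have hminus : 1 ≤ ‖x - y‖ := by linarith [norm_sub_norm_le x y]
      simp [secondDiff, bump_eq_zero_of_one_le_norm, hx₀, hplus, hminus]
  · rw [min_eq_right (one_le_pow₀ hy.le), abs_le]
    unfold secondDiff
    constructor <;> linarith [bump_nonneg x, bump_le_one x, bump_nonneg (x + y),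
      bump_le_one (x + y), bump_nonneg (x - y), bump_le_one (x - y)]

/-- **Boundedness and sign of the fractional Laplacian of the bump function** (Lemma 6).
For `α ∈ (0,2)` the integral defining `L_α ψ(x)` converges absolutely for every `x`,
`|L_α ψ|` is bounded by a constant `k_α > 0`, and `L_α ψ(x) ≤ 0` for `‖x‖ ≥ 1`. -/
theorem fracLap_bump_bounded_and_sign (α : ℝ) (hα0 : 0 < α) (hα2 : α < 2) :
    (∀ x : Plane, Integrable (fun y : Plane =>
      (2 * bump x - bump (x + y) - bump (x - y)) / (2 * ‖y‖ ^ (2 + α)))) ∧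
    (∃ k : ℝ, 0 < k ∧ ∀ x : Plane, |fracLapKernel α bump x| ≤ k) ∧
    (∀ x : Plane, 1 ≤ ‖x‖ → fracLapKernel α bump x ≤ 0) := by
  have hdim : (Module.finrank ℝ Plane : ℝ) = 2 := by simp
  have hint := integrable_secondDiff_div_rpow volume hα0 hα2 measurable_bump
    abs_secondDiff_bump_le
  have hbound := abs_integral_secondDiff_div_rpow_le volume hα0 hα2 abs_secondDiff_bump_le
  rw [hdim] at hint hbound
  refine ⟨hint, ⟨_, lt_max_of_lt_right one_pos, fun x => (hbound x).trans (le_max_left _ 1)⟩,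
    fun x hx => integral_secondDiff_div_rpow_nonpos volume (fun z => ?_) _⟩
  exact (bump_eq_zero_of_one_le_norm hx).trans_le (bump_nonneg z)
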